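/- Let a ∈ ℝ, b > 0, c = a/b and c₀ < 0, and let ρ(x,t) = ρ¹(x,t) + ρ²(x,t) + ρ³(x,t) be the explicit solution defined below. Then for every x > 0, ρ(x,t) → −c₀ e^{c₀ x} as t → 0⁺; that is, the explicit solution attains the exponential initial datum ρ₀(x) = −c₀ e^{c₀ x} pointwise. -/

import Mathlib

open MeasureTheory Set Filter Topology

/-- The standard normal cumulative distribution function `Φ`. -/
noncomputable def stdNormalCdf (z : ℝ) : ℝ :=
  ∫ x in Iic z, (Real.sqrt (2 * Real.pi))⁻¹ * Real.exp (-x ^ 2 / 2)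

/-- First part `ρ¹` of the explicit solution (with `c = a/b`, `σ = √(2bt)`). -/
noncomputable def explRho1 (a b c₀ : ℝ) (x t : ℝ) : ℝ :=
  -c₀ * Real.exp (c₀ * (c₀ * b * t + x - a * t)) *
    stdNormalCdf ((2 * c₀ * b * t + x - a * t) / Real.sqrt (2 * b * t))

/-- Second part `ρ²` of the explicit solution (with `d = c₀ − a/b`). -/
noncomputable def explRho2 (a b c₀ : ℝ) (x t : ℝ) : ℝ :=
  -c₀ * Real.exp ((c₀ - a / b) * ((c₀ - a / b) * b * t - x + a * t)) *
    stdNormalCdf ((2 * (c₀ - a / b) * b * t - x + a * t) / Real.sqrt (2 * b * t))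

/-- Third part `ρ³` of the explicit solution (with `c = a/b`). -/
noncomputable def explRho3 (a b c₀ : ℝ) (x t : ℝ) : ℝ :=
  -(a / b) * Real.exp ((a / b) * x) *
      stdNormalCdf (-(x + a * t) / Real.sqrt (2 * b * t))
  + (a / b) * Real.exp ((a / b) * x) * Real.exp (c₀ * (c₀ * b * t - x - a * t)) *
      stdNormalCdf ((2 * c₀ * b * t - x - a * t) / Real.sqrt (2 * b * t))

/-- The explicit solution `ρ = ρ¹ + ρ² + ρ³` of the Smoluchowski equation on the
half-line with exponential initial datum `ρ₀(x) = −c₀ e^{c₀ x}`. -/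
noncomputable def explRho (a b c₀ : ℝ) (x t : ℝ) : ℝ :=
  explRho1 a b c₀ x t + explRho2 a b c₀ x t + explRho3 a b c₀ x t

/-!
As `t → 0⁺` we have `σ = √(2bt) → 0⁺`, so each argument `h(t)/σ` of `Φ` tends to `±∞`
according to the sign of `h(0)`, which is `x` in `ρ¹` and `-x` in all other terms. Since
`Φ(+∞) = 1` and `Φ(-∞) = 0`, only `ρ¹` survives, and its prefactor tends to `-c₀ e^{c₀ x}`.
-/

open ProbabilityTheory

lemma stdNormalCdf_eq_cdf_gaussianReal :
    stdNormalCdf = cdf (gaussianReal 0 1) := by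
  ext z
  rw [cdf_eq_real, measureReal_def,
    gaussianReal_apply_eq_integral _ one_ne_zero,
    ENNReal.toReal_ofReal (integral_nonneg fun _ => gaussianPDFReal_nonneg _ _ _)]
  simp [stdNormalCdf, gaussianPDFReal]

lemma tendsto_stdNormalCdf_atTop : Tendsto stdNormalCdf atTop (𝓝 1) :=
  stdNormalCdf_eq_cdf_gaussianReal ▸ tendsto_cdf_atTop _

lemma tendsto_stdNormalCdf_atBot : Tendsto stdNormalCdf atBot (𝓝 0) :=
  stdNormalCdf_eq_cdf_gaussianReal ▸ tendsto_cdf_atBot _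

section SmallTime

variable {b : ℝ} {g h : ℝ → ℝ}

lemma tendsto_inv_sqrt_two_mul_atTop (hb : 0 < b) :
    Tendsto (fun t => (Real.sqrt (2 * b * t))⁻¹) (𝓝[>] 0) atTop := by
  refine tendsto_inv_nhdsGT_zero.comp (tendsto_nhdsWithin_iff.2 ⟨?_, ?_⟩)
  · have : ContinuousAt (fun t => Real.sqrt (2 * b * t)) 0 := by fun_prop
    simpa using this.tendsto.mono_left nhdsWithin_le_nhds
  · filter_upwards [self_mem_nhdsWithin] with t (ht : 0 < t)
    exact Real.sqrt_pos.2 (by positivity)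

lemma tendsto_div_sqrt_two_mul_atTop (hb : 0 < b) (hh : ContinuousAt h 0) (h0 : 0 < h 0) :
    Tendsto (fun t => h t / Real.sqrt (2 * b * t)) (𝓝[>] 0) atTop :=
  (hh.tendsto.mono_left nhdsWithin_le_nhds).pos_mul_atTop h0 (tendsto_inv_sqrt_two_mul_atTop hb)

lemma tendsto_div_sqrt_two_mul_atBot (hb : 0 < b) (hh : ContinuousAt h 0) (h0 : h 0 < 0) :
    Tendsto (fun t => h t / Real.sqrt (2 * b * t)) (𝓝[>] 0) atBot :=
  (hh.tendsto.mono_left nhdsWithin_le_nhds).neg_mul_atTop h0 (tendsto_inv_sqrt_two_mul_atTop hb)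

lemma tendsto_mul_stdNormalCdf_of_pos (hb : 0 < b) (hg : ContinuousAt g 0) (hh : ContinuousAt h 0)
    (h0 : 0 < h 0) :
    Tendsto (fun t => g t * stdNormalCdf (h t / Real.sqrt (2 * b * t))) (𝓝[>] 0) (𝓝 (g 0)) := by
  simpa using (hg.tendsto.mono_left nhdsWithin_le_nhds).mul
    (tendsto_stdNormalCdf_atTop.comp (tendsto_div_sqrt_two_mul_atTop hb hh h0))

lemma tendsto_mul_stdNormalCdf_of_neg (hb : 0 < b) (hg : ContinuousAt g 0) (hh : ContinuousAt h 0)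
    (h0 : h 0 < 0) :
    Tendsto (fun t => g t * stdNormalCdf (h t / Real.sqrt (2 * b * t))) (𝓝[>] 0) (𝓝 0) := by
  simpa using (hg.tendsto.mono_left nhdsWithin_le_nhds).mul
    (tendsto_stdNormalCdf_atBot.comp (tendsto_div_sqrt_two_mul_atBot hb hh h0))

end SmallTime

theorem stmt_11_general (a b c₀ : ℝ) (hb : 0 < b) :
    ∀ x > (0:ℝ),
      Tendsto (fun t => explRho a b c₀ x t) (𝓝[>] 0)
        (𝓝 (-c₀ * Real.exp (c₀ * x))) := by
  intro x hx
  have hx' : -x < 0 := neg_neg_iff_pos.2 hx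
  have hρ₁ := tendsto_mul_stdNormalCdf_of_pos hb
    (g := fun t => -c₀ * Real.exp (c₀ * (c₀ * b * t + x - a * t)))
    (h := fun t => 2 * c₀ * b * t + x - a * t) (by fun_prop) (by fun_prop) (by simpa using hx)
  have hρ₂ := tendsto_mul_stdNormalCdf_of_neg hb
    (g := fun t => -c₀ * Real.exp ((c₀ - a / b) * ((c₀ - a / b) * b * t - x + a * t)))
    (h := fun t => 2 * (c₀ - a / b) * b * t - x + a * t) (by fun_prop) (by fun_prop)
    (by simpa using hx')
  have hρ₃ := tendsto_mul_stdNormalCdf_of_neg hb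
    (g := fun _ => -(a / b) * Real.exp ((a / b) * x))
    (h := fun t => -(x + a * t)) (by fun_prop) (by fun_prop) (by simpa using hx')
  have hρ₃' := tendsto_mul_stdNormalCdf_of_neg hb
    (g := fun t => (a / b) * Real.exp ((a / b) * x) * Real.exp (c₀ * (c₀ * b * t - x - a * t)))
    (h := fun t => 2 * c₀ * b * t - x - a * t) (by fun_prop) (by fun_prop) (by simpa using hx')
  simpa [explRho, explRho1, explRho2, explRho3, add_assoc] using hρ₁.add (hρ₂.add (hρ₃.add hρ₃'))

/-- The explicit solution attains the exponential initial datum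
`ρ₀(x) = −c₀ e^{c₀ x}` pointwise as `t → 0⁺`. -/
theorem stmt_11 (a b c₀ : ℝ) (hb : 0 < b) (hc₀ : c₀ < 0) :
    ∀ x > (0:ℝ),
      Tendsto (fun t => explRho a b c₀ x t) (𝓝[>] 0)
        (𝓝 (-c₀ * Real.exp (c₀ * x))) :=
  stmt_11_general a b c₀ hb
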